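/- arXiv:0907.2440 — 6 statements merged into one kernel-verified Lean document; each statement's English description precedes it below -/
import Mathlib

section
/- Let X ∈ SL(2,ℂ). For every x ∈ ℝ⁴, the matrix X Γ(x) Xᴴ is Hermitian, hence equals Γ(x̂) for a unique x̂ ∈ ℝ⁴; the map x ↦ x̂ is ℝ-linear and preserves the Minkowski quadratic form: q(x̂) = q(x), where q(x) = (x⁰)² − (x¹)² − (x²)² − (x³)² = det Γ(x). -/
open Matrix

noncomputable section

/-- Pauli matrix σ₁. -/
def σ1 : Matrix (Fin 2) (Fin 2) ℂ := !![0, 1; 1, 0]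
/-- Pauli matrix σ₂. -/
def σ2 : Matrix (Fin 2) (Fin 2) ℂ := !![0, -Complex.I; Complex.I, 0]
/-- Pauli matrix σ₃. -/
def σ3 : Matrix (Fin 2) (Fin 2) ℂ := !![1, 0; 0, -1]

/-- The triple of Pauli matrices. -/
def pauli : Fin 3 → Matrix (Fin 2) (Fin 2) ℂ := ![σ1, σ2, σ3]

/-- σ·a = a₁σ₁ + a₂σ₂ + a₃σ₃ for a ∈ ℝ³. -/
def sigmaDot (a : Fin 3 → ℝ) : Matrix (Fin 2) (Fin 2) ℂ := ∑ i, (a i : ℂ) • pauli i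

/-- The Hermitian inner product ⟨z,w⟩ = z̄₀w₀ + z̄₁w₁ on ℂ², conjugate-linear in the
first argument. -/
def herm (z w : Fin 2 → ℂ) : ℂ := star (z 0) * w 0 + star (z 1) * w 1

/-- The antilinear map J(z₀,z₁) = (−z̄₁, z̄₀) on ℂ². -/
def Jmap (z : Fin 2 → ℂ) : Fin 2 → ℂ := ![-(star (z 1)), star (z 0)]

/-- The matrix ε = [[0,−1],[1,0]]. -/
def eps : Matrix (Fin 2) (Fin 2) ℂ := !![0, -1; 1, 0]

/-- Γ(x) = x⁰·I + x¹σ₁ + x²σ₂ + x³σ₃. -/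
def Gamma (x : Fin 4 → ℝ) : Matrix (Fin 2) (Fin 2) ℂ :=
  (x 0 : ℂ) • 1 + (x 1 : ℂ) • σ1 + (x 2 : ℂ) • σ2 + (x 3 : ℂ) • σ3

/-- The Minkowski quadratic form q(x) = (x⁰)² − (x¹)² − (x²)² − (x³)². -/
def qMink (x : Fin 4 → ℝ) : ℝ := x 0 ^ 2 - x 1 ^ 2 - x 2 ^ 2 - x 3 ^ 2

lemma Gamma_entries (x : Fin 4 → ℝ) :
    Gamma x = !![((x 0 : ℂ) + x 3), ((x 1 : ℂ) - (x 2 : ℂ) * Complex.I);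
      ((x 1 : ℂ) + (x 2 : ℂ) * Complex.I), ((x 0 : ℂ) - x 3)] := by
  ext i j
  fin_cases i <;> fin_cases j <;>
    simp [Gamma, σ1, σ2, σ3, Matrix.one_apply] <;> ring

lemma Gamma_det (x : Fin 4 → ℝ) : (Gamma x).det = (qMink x : ℂ) := by
  rw [Gamma_entries, Matrix.det_fin_two_of, qMink]
  push_cast
  ring_nf
  simp [Complex.I_sq]
  ring

lemma Gamma_inj : Function.Injective Gamma := by
  intro a b h
  rw [Gamma_entries, Gamma_entries] at h
  have e00 := congrArg Complex.re (congrFun (congrFun h 0) 0)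
  have e11 := congrArg Complex.re (congrFun (congrFun h 1) 1)
  have e01r := congrArg Complex.re (congrFun (congrFun h 0) 1)
  have e01i := congrArg Complex.im (congrFun (congrFun h 0) 1)
  simp [Complex.add_re, Complex.sub_re, Complex.sub_im, Complex.mul_im, Complex.mul_re] at e00 e11 e01r e01i
  funext i
  fin_cases i <;> simp <;> linarith

lemma Gamma_herm (x : Fin 4 → ℝ) : (Gamma x).IsHermitian := by
  rw [Gamma_entries]
  ext i j
  fin_cases i <;> fin_cases j <;> simp [Matrix.conjTranspose_apply] <;> ring

/-- Recover the 4-vector from a Hermitian matrix. -/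
def recov (M : Matrix (Fin 2) (Fin 2) ℂ) : Fin 4 → ℝ :=
  ![((M 0 0).re + (M 1 1).re) / 2, (M 0 1).re, -((M 0 1).im),
    ((M 0 0).re - (M 1 1).re) / 2]

lemma Gamma_recov {M : Matrix (Fin 2) (Fin 2) ℂ} (hM : M.IsHermitian) :
    Gamma (recov M) = M := by
  have h00 := congrFun (congrFun hM.symm 0) 0
  have h11 := congrFun (congrFun hM.symm 1) 1
  have h10 := congrFun (congrFun hM.symm 1) 0
  simp [Matrix.conjTranspose_apply] at h00 h11 h10
  have i00 : (M 0 0).im = 0 := by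
    have := congrArg Complex.im h00; simp at this; linarith
  have i11 : (M 1 1).im = 0 := by
    have := congrArg Complex.im h11; simp at this; linarith
  have r10 : (M 1 0).re = (M 0 1).re := by
    have := congrArg Complex.re h10; simpa using this
  have i10 : (M 1 0).im = -(M 0 1).im := by
    have := congrArg Complex.im h10; simpa using this
  rw [Gamma_entries]
  ext i j
  fin_cases i <;> fin_cases j <;>
    apply Complex.ext <;>
    simp [recov, Complex.add_re, Complex.add_im, Complex.sub_re, Complex.sub_im,
      Complex.mul_re, Complex.mul_im] <;>
    linarith

lemma Gamma_add (x y : Fin 4 → ℝ) : Gamma (x + y) = Gamma x + Gamma y := by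
  simp only [Gamma, Pi.add_apply]
  push_cast
  simp [add_smul]
  abel

lemma Gamma_smul (c : ℝ) (x : Fin 4 → ℝ) : Gamma (c • x) = (c : ℂ) • Gamma x := by
  ext i j
  fin_cases i <;> fin_cases j <;>
    simp [Gamma, σ1, σ2, σ3, Matrix.one_apply] <;> push_cast <;> ring

lemma recov_add (A B : Matrix (Fin 2) (Fin 2) ℂ) :
    recov (A + B) = recov A + recov B := by
  funext i
  fin_cases i <;> simp [recov] <;> ring

lemma recov_smul (c : ℝ) (A : Matrix (Fin 2) (Fin 2) ℂ) :
    recov ((c : ℂ) • A) = c • recov A := by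
  funext i
  fin_cases i <;> simp [recov, Complex.mul_re, Complex.mul_im] <;> ring


/-- For X ∈ SL(2,ℂ): each X Γ(x) Xᴴ is Hermitian, q(x) = det Γ(x), and there is a
unique ℝ-linear map x ↦ x̂ with Γ(x̂) = X Γ(x) Xᴴ, which preserves q. -/
theorem stmt6 (X : Matrix (Fin 2) (Fin 2) ℂ) (hX : X.det = 1) :
    (∀ x : Fin 4 → ℝ, (X * Gamma x * Xᴴ).IsHermitian) ∧
    (∀ x : Fin 4 → ℝ, (Gamma x).det = (qMink x : ℂ)) ∧
    (∃! f : (Fin 4 → ℝ) →ₗ[ℝ] (Fin 4 → ℝ),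
      (∀ x, Gamma (f x) = X * Gamma x * Xᴴ) ∧ (∀ x, qMink (f x) = qMink x)) := by
  have hherm : ∀ x : Fin 4 → ℝ, (X * Gamma x * Xᴴ).IsHermitian := by
    intro x
    have hg := (Gamma_herm x).eq
    simp [Matrix.IsHermitian, Matrix.conjTranspose_mul, hg, Matrix.mul_assoc]
  refine ⟨hherm, Gamma_det, ?_⟩
  set F : (Fin 4 → ℝ) →ₗ[ℝ] (Fin 4 → ℝ) :=
    { toFun := fun x => recov (X * Gamma x * Xᴴ)
      map_add' := by
        intro x y
        show recov (X * Gamma (x + y) * Xᴴ) = _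
        rw [Gamma_add, Matrix.mul_add, Matrix.add_mul, recov_add]
      map_smul' := by
        intro c x
        show recov (X * Gamma (c • x) * Xᴴ) = c • recov (X * Gamma x * Xᴴ)
        rw [Gamma_smul, mul_smul_comm, smul_mul_assoc, recov_smul] } with hF
  have hGF : ∀ x, Gamma (F x) = X * Gamma x * Xᴴ := by
    intro x
    exact Gamma_recov (hherm x)
  have hq : ∀ x, qMink (F x) = qMink x := by
    intro x
    have : ((qMink (F x) : ℝ) : ℂ) = ((qMink x : ℝ) : ℂ) := by
      rw [← Gamma_det, ← Gamma_det, hGF, Matrix.det_mul, Matrix.det_mul,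
        Matrix.det_conjTranspose, hX]
      simp
    exact_mod_cast this
  refine ⟨F, ⟨hGF, hq⟩, ?_⟩
  intro g hg
  apply LinearMap.ext
  intro x
  apply Gamma_inj
  rw [hg.1 x, hGF x]
end
end

section
/- Let H be a 2×2 complex Hermitian matrix with det H = 1, let r ∈ ℝ, and let ξ ∈ ℂ² be a unit spinor with H ξ = e^r ξ. Then H = (cosh r)·I + (sinh r)·(σ·n_ξ) = exp(r · σ·n_ξ), where n_ξ ∈ ℝ³ has components (n_ξ)ᵢ = ⟨ξ, σᵢ ξ⟩. -/
/-!
Put `η := Jmap ξ`. Since `Jmap (M ξ) = adj(Mᴴ) (Jmap ξ)` for every `2 × 2` matrix `M`, and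
`adj H = H⁻¹` for `H` Hermitian of determinant one, `η` is an eigenvector of `H` with
eigenvalue `e⁻ʳ`. The rank-one projections `P = ξξ*` and `Q = ηη*` satisfy `P + Q = 1` and
`σ·n_ξ = P - Q`, so `H = eʳ P + e⁻ʳ Q = cosh r + sinh r (P - Q)`. Finally `(P - Q)² = 1`, and
for any involution `A` the exponential series splits into `exp (z A) = cosh z + sinh z A`.
-/

open Matrix

noncomputable section

open NormedSpace Nat

theorem exp_smul_of_mul_self_eq_one {𝔸 : Type*} [NormedRing 𝔸] [NormedAlgebra ℂ 𝔸]
    [CompleteSpace 𝔸] {A : 𝔸} (hA : A * A = 1) (z : ℂ) :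
    exp (z • A) = Complex.cosh z • 1 + Complex.sinh z • A := by
  have hterm (n : ℕ) : ((n ! : ℂ)⁻¹) • (z • A) ^ n = (z ^ n / n !) • A ^ n := by
    rw [smul_pow, smul_smul, div_eq_inv_mul]
  have heven (k : ℕ) : A ^ (2 * k) = 1 := by rw [pow_mul, sq, hA, one_pow]
  have hodd (k : ℕ) : A ^ (2 * k + 1) = A := by rw [pow_succ, heven, one_mul]
  refine (exp_series_hasSum_exp' (𝕂 := ℂ) (z • A)).unique (HasSum.even_add_odd ?_ ?_)
  · simpa only [hterm, heven] using (Complex.hasSum_cosh z).smul_const (1 : 𝔸)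
  · simpa only [hterm, hodd] using (Complex.hasSum_sinh z).smul_const A

theorem IsIdempotentElem.sub_mul_self_eq_one {R : Type*} [Ring R] {P Q : R}
    (hP : IsIdempotentElem P) (hPQ : P + Q = 1) : (P - Q) * (P - Q) = 1 := by
  rw [← sub_eq_of_eq_add' hPQ.symm]
  calc (P - (1 - P)) * (P - (1 - P)) = 1 + 4 • (P * P - P) := by noncomm_ring
    _ = 1 := by rw [hP.eq, sub_self, smul_zero, add_zero]

theorem isIdempotentElem_vecMulVec_star {R n : Type*} [Semiring R] [StarRing R] [Fintype n]
    {ξ : n → R}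
    (hξ : star ξ ⬝ᵥ ξ = 1) : IsIdempotentElem (vecMulVec ξ (star ξ)) := by
  rw [IsIdempotentElem, vecMulVec_mul_vecMulVec, hξ, one_smul]

theorem eq_smul_vecMulVec_add_smul_vecMulVec {R n : Type*} [CommSemiring R] [StarRing R]
    [Fintype n] [DecidableEq n] {M : Matrix n n R} {ξ η : n → R} {a b : R}
    (hξη : vecMulVec ξ (star ξ) + vecMulVec η (star η) = 1)
    (hξ : M *ᵥ ξ = a • ξ) (hη : M *ᵥ η = b • η) :
    M = a • vecMulVec ξ (star ξ) + b • vecMulVec η (star η) := by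
  rw [← smul_vecMulVec, ← smul_vecMulVec, ← hξ, ← hη, ← mul_vecMulVec, ← mul_vecMulVec,
    ← mul_add, hξη, mul_one]

theorem dotProduct_star_self_eq_herm (ξ : Fin 2 → ℂ) : star ξ ⬝ᵥ ξ = herm ξ ξ := by
  simp [dotProduct, Fin.sum_univ_two, herm]

theorem Jmap_smul (c : ℂ) (z : Fin 2 → ℂ) : Jmap (c • z) = star c • Jmap z := by
  ext i; fin_cases i <;> simp [Jmap]

theorem Jmap_mulVec (M : Matrix (Fin 2) (Fin 2) ℂ) (z : Fin 2 → ℂ) :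
    Jmap (M *ᵥ z) = (Mᴴ).adjugate *ᵥ Jmap z := by
  ext i; fin_cases i <;> simp [Jmap, adjugate_fin_two, mulVec, dotProduct, Fin.sum_univ_two]; ring

theorem mulVec_Jmap_of_mulVec_eq_smul {H : Matrix (Fin 2) (Fin 2) ℂ} (hH : H.IsHermitian)
    (hdet : H.det = 1) {ξ : Fin 2 → ℂ} {c : ℂ} (hc : c ≠ 0) (hξ : H *ᵥ ξ = c • ξ) :
    H *ᵥ Jmap ξ = (star c)⁻¹ • Jmap ξ := by
  rw [eq_inv_smul_iff₀ (star_ne_zero.mpr hc)]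
  calc star c • H *ᵥ Jmap ξ = (H * H.adjugate) *ᵥ Jmap ξ := by
        rw [← mulVec_mulVec, ← hH.eq, ← Jmap_mulVec, hH.eq, hξ, Jmap_smul, mulVec_smul]
    _ = Jmap ξ := by rw [mul_adjugate, hdet, one_smul, one_mulVec]

theorem vecMulVec_add_vecMulVec_Jmap (ξ : Fin 2 → ℂ) :
    vecMulVec ξ (star ξ) + vecMulVec (Jmap ξ) (star (Jmap ξ)) = herm ξ ξ • 1 := by
  ext i j; fin_cases i <;> fin_cases j <;> simp [Jmap, herm, vecMulVec] <;> ring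

theorem sigmaDot_herm_pauli (ξ : Fin 2 → ℂ) :
    sigmaDot (fun i => (herm ξ ((pauli i) *ᵥ ξ)).re)
      = vecMulVec ξ (star ξ) - vecMulVec (Jmap ξ) (star (Jmap ξ)) := by
  ext i j; fin_cases i <;> fin_cases j <;>
    simp [sigmaDot, Fin.sum_univ_three, pauli, σ1, σ2, σ3, herm, Jmap, vecMulVec, mulVec,
      dotProduct, Fin.sum_univ_two, Complex.ext_iff] <;> ring_nf <;> simp

/-- If H is Hermitian with det H = 1 and Hξ = eʳξ for a unit spinor ξ, then
H = cosh r · I + sinh r · σ·n_ξ = exp(r σ·n_ξ). -/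
theorem stmt10 (H : Matrix (Fin 2) (Fin 2) ℂ) (hH : H.IsHermitian) (hdet : H.det = 1)
    (r : ℝ) (ξ : Fin 2 → ℂ) (hξ : herm ξ ξ = 1)
    (heig : H.mulVec ξ = (Real.exp r : ℂ) • ξ) :
    H = (Real.cosh r : ℂ) • (1 : Matrix (Fin 2) (Fin 2) ℂ)
        + (Real.sinh r : ℂ) • sigmaDot (fun i => (herm ξ ((pauli i).mulVec ξ)).re) ∧
    H = NormedSpace.exp
        ((r : ℂ) • sigmaDot (fun i => (herm ξ ((pauli i).mulVec ξ)).re)) := by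
  rw [sigmaDot_herm_pauli]
  have hPQ : vecMulVec ξ (star ξ) + vecMulVec (Jmap ξ) (star (Jmap ξ)) = 1 := by
    rw [vecMulVec_add_vecMulVec_Jmap, hξ, one_smul]
  have hJ : H *ᵥ Jmap ξ = (Real.exp (-r) : ℂ) • Jmap ξ := by
    rw [mulVec_Jmap_of_mulVec_eq_smul hH hdet (by exact_mod_cast (Real.exp_pos r).ne') heig,
      Complex.star_def, Complex.conj_ofReal, Real.exp_neg, Complex.ofReal_inv]
  have hcosh : H = (Real.cosh r : ℂ) • (1 : Matrix (Fin 2) (Fin 2) ℂ) + (Real.sinh r : ℂ) •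
      (vecMulVec ξ (star ξ) - vecMulVec (Jmap ξ) (star (Jmap ξ))) := by
    rw [eq_smul_vecMulVec_add_smul_vecMulVec hPQ heig hJ, ← hPQ, ← Real.cosh_add_sinh,
      ← Real.cosh_sub_sinh]
    push_cast
    module
  refine ⟨hcosh, ?_⟩
  have hinvol := (isIdempotentElem_vecMulVec_star
    ((dotProduct_star_self_eq_herm ξ).trans hξ)).sub_mul_self_eq_one hPQ
  -- `exp` on matrices is norm-independent; any algebra norm makes the series argument available.
  let := Matrix.linftyOpNormedRing (n := Fin 2) (α := ℂ)
  let := Matrix.linftyOpNormedAlgebra (R := ℂ) (n := Fin 2) (α := ℂ)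
  have hexp := exp_smul_of_mul_self_eq_one hinvol (r : ℂ)
  rw [← Complex.ofReal_cosh, ← Complex.ofReal_sinh] at hexp
  exact hcosh.trans hexp.symm
end
end

section
/- Let k, p : {(a,b) : a,b ∈ {1,…,5}, a ≠ b} → ℝ be symmetric (k_ab = k_ba, p_ab = p_ba) with k_ab ≠ 0 for all a ≠ b, and let n_ab ∈ ℝ³ be given for all a ≠ b such that for each fixed a the four vectors {n_ab : b ≠ a} span ℝ³. Suppose for each a the closure conditions Σ_{b ≠ a} p_ab n_ab = 0 and Σ_{b ≠ a} k_ab n_ab = 0 hold. Then there exists a single constant γ ∈ ℝ such that p_ab = γ k_ab for all a ≠ b. -/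
/-! At a tetrahedron `a`, the coefficient families `(c_b)_{b ≠ a}` with `∑ c_b n_ab = 0` form the
kernel of a surjection `ℝ⁴ → ℝ³`, which is a line; hence `p_a· = γ_a k_a·`. The triangle `ab`
shared by `a` and `b` carries the same labels on both sides, so `γ_a k_ab = γ_b k_ab`, and
`k_ab ≠ 0` gives `γ_a = γ_b`. -/

open Module

section

variable {ι K V : Type*} [Fintype ι] [Field K] [AddCommGroup V] [Module K V]

theorem finrank_ker_linearCombination_eq_one {v : ι → V}
    (hv : Submodule.span K (Set.range v) = ⊤) (hcard : Fintype.card ι = finrank K V + 1) :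
    finrank K (LinearMap.ker (Fintype.linearCombination K v)) = 1 := by
  have h := LinearMap.finrank_range_add_finrank_ker (Fintype.linearCombination K v)
  rw [Fintype.range_linearCombination, hv, finrank_top, finrank_fintype_fun_eq_card,
    hcard] at h
  omega

theorem exists_eq_smul_of_linearCombination_eq_zero {v : ι → V}
    (hv : Submodule.span K (Set.range v) = ⊤) (hcard : Fintype.card ι = finrank K V + 1)
    {c d : ι → K} (hc0 : c ≠ 0) (hc : ∑ i, c i • v i = 0) (hd : ∑ i, d i • v i = 0) :
    ∃ γ : K, d = γ • c := by
  let c' : LinearMap.ker (Fintype.linearCombination K v) :=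
    ⟨c, by rwa [LinearMap.mem_ker, Fintype.linearCombination_apply]⟩
  have hc'0 : c' ≠ 0 := fun h => hc0 (congrArg Subtype.val h)
  obtain ⟨γ, hγ⟩ := (finrank_eq_one_iff_of_nonzero' c' hc'0).mp
    (finrank_ker_linearCombination_eq_one hv hcard)
    ⟨d, by rwa [LinearMap.mem_ker, Fintype.linearCombination_apply]⟩
  exact ⟨γ, (congrArg Subtype.val hγ).symm⟩

end

theorem exists_forall_ne_eq_mul_of_closure {ι K V : Type*} [Fintype ι] [DecidableEq ι] [Field K]
    [AddCommGroup V] [Module K V]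
    (hcard : Fintype.card ι = finrank K V + 2) {a : ι} {v : ι → V}
    (hv : Submodule.span K {x | ∃ b, b ≠ a ∧ x = v b} = ⊤) {c d : ι → K}
    (hc0 : ∃ b, b ≠ a ∧ c b ≠ 0)
    (hc : ∑ b ∈ Finset.univ.filter (· ≠ a), c b • v b = 0)
    (hd : ∑ b ∈ Finset.univ.filter (· ≠ a), d b • v b = 0) :
    ∃ γ : K, ∀ b, b ≠ a → d b = γ * c b := by
  have hsum (e : ι → K) : ∑ b ∈ Finset.univ.filter (· ≠ a), e b • v b =
      ∑ b : {b // b ≠ a}, e b • v b :=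
    Finset.sum_subtype _ (by simp) _
  have hrange : Set.range (fun b : {b // b ≠ a} => v b) = {x | ∃ b, b ≠ a ∧ x = v b} := by
    ext x
    simp [eq_comm]
  obtain ⟨b₀, hb₀, hcb₀⟩ := hc0
  obtain ⟨γ, hγ⟩ := exists_eq_smul_of_linearCombination_eq_zero (K := K)
    (v := fun b : {b // b ≠ a} => v b) (c := fun b => c b) (d := fun b => d b)
    (hrange ▸ hv) (by simp [Fintype.card_subtype_compl, hcard])
    (fun h => hcb₀ (congrFun h ⟨b₀, hb₀⟩)) (hsum c ▸ hc) (hsum d ▸ hd)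
  exact ⟨γ, fun b hb => congrFun hγ ⟨b, hb⟩⟩

theorem exists_forall_ne_eq_mul_of_forall_exists {ι K : Type*} [Field K] [Nonempty ι]
    {k p : ι → ι → K} (hksymm : ∀ a b, a ≠ b → k a b = k b a)
    (hpsymm : ∀ a b, a ≠ b → p a b = p b a) (hk0 : ∀ a b, a ≠ b → k a b ≠ 0)
    (hloc : ∀ a, ∃ γ : K, ∀ b, b ≠ a → p a b = γ * k a b) :
    ∃ γ : K, ∀ a b, a ≠ b → p a b = γ * k a b := by
  choose γ hγ using hloc
  have hγ_eq (a b : ι) : γ a = γ b := by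
    rcases eq_or_ne a b with rfl | hab
    · rfl
    refine mul_right_cancel₀ (hk0 a b hab) ?_
    rw [← hγ a b hab.symm, hpsymm a b hab, hγ b a hab, hksymm a b hab]
  obtain ⟨a₀⟩ := ‹Nonempty ι›
  exact ⟨γ a₀, fun a b hab => hγ_eq a a₀ ▸ hγ a b hab.symm⟩

/-- Five tetrahedra closure: symmetric labels k, p on pairs of distinct indices with
k ≠ 0, normals n_ab spanning ℝ³ at each a, and both closure conditions at each a,
force p_ab = γ k_ab for a single constant γ. -/
theorem stmt12 (k p : Fin 5 → Fin 5 → ℝ) (n : Fin 5 → Fin 5 → Fin 3 → ℝ)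
    (hksymm : ∀ a b, a ≠ b → k a b = k b a)
    (hpsymm : ∀ a b, a ≠ b → p a b = p b a)
    (hk0 : ∀ a b, a ≠ b → k a b ≠ 0)
    (hspan : ∀ a : Fin 5, Submodule.span ℝ {x | ∃ b, b ≠ a ∧ x = n a b} = ⊤)
    (hpclose : ∀ a : Fin 5, ∑ b ∈ Finset.univ.filter (· ≠ a), p a b • n a b = 0)
    (hkclose : ∀ a : Fin 5, ∑ b ∈ Finset.univ.filter (· ≠ a), k a b • n a b = 0) :
    ∃ γ : ℝ, ∀ a b, a ≠ b → p a b = γ * k a b := by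
  refine exists_forall_ne_eq_mul_of_forall_exists hksymm hpsymm hk0 fun a => ?_
  obtain ⟨b, hb⟩ := exists_ne a
  exact exists_forall_ne_eq_mul_of_closure (by simp) (hspan a)
    ⟨b, hb, hk0 a b hb.symm⟩ (hkclose a) (hpclose a)
end

section
/- Let k : {(a,b) : a,b ∈ {1,…,5}, a ≠ b} → ℝ be symmetric with 2 k_ab ∈ ℤ for all a ≠ b, and suppose that for each a the sum Σ_{b ≠ a} k_ab is an integer. Let ε : {1,…,5} → {+1,−1} be arbitrary. Then the sum M = Σ_{a<b, ε_a ≠ ε_b} k_ab is an integer (not merely a half-integer). -/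
/-- If the half-integers k_ab are symmetric, their sum at each tetrahedron is an
integer, and ε assigns ±1 to each tetrahedron, then the sum of k_ab over thin wedges
(pairs a < b with ε_a ≠ ε_b) is an integer. -/
theorem stmt13 (k : Fin 5 → Fin 5 → ℝ)
    (hsymm : ∀ a b, a ≠ b → k a b = k b a)
    (hhalf : ∀ a b : Fin 5, a ≠ b → ∃ m : ℤ, 2 * k a b = m)
    (hint : ∀ a : Fin 5, ∃ m : ℤ, ∑ b ∈ Finset.univ.filter (· ≠ a), k a b = m)
    (ε : Fin 5 → ℤ) (hε : ∀ a, ε a = 1 ∨ ε a = -1) :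
    ∃ M : ℤ,
      ∑ q ∈ Finset.univ.filter (fun q : Fin 5 × Fin 5 => q.1 < q.2 ∧ ε q.1 ≠ ε q.2),
        k q.1 q.2 = M := by
  classical
  choose t ht using hint
  set n : Fin 5 → Fin 5 → ℤ := fun a b => if h : a ≠ b then (hhalf a b h).choose else 0 with hn_def
  have hn2 : ∀ a b : Fin 5, a ≠ b → (2 : ℝ) * k a b = (n a b : ℝ) := by
    intro a b h
    simp only [hn_def, dif_pos h]
    exact (hhalf a b h).choose_spec
  refine ⟨(∑ a ∈ Finset.univ.filter (fun a => ε a = -1), t a)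
    - ∑ q ∈ Finset.univ.filter (fun q : Fin 5 × Fin 5 => q.1 < q.2 ∧ ε q.1 = -1 ∧ ε q.2 = -1),
        n q.1 q.2, ?_⟩
  push_cast
  rw [Finset.sum_congr rfl (fun a _ => (ht a).symm : ∀ a ∈ Finset.univ.filter (fun a => ε a = -1), ((t a : ℝ)) = ∑ b ∈ Finset.univ.filter (· ≠ a), k a b)]
  rw [Finset.sum_congr rfl (fun q hq => by
    simp only [Finset.mem_filter] at hq
    exact (hn2 q.1 q.2 (ne_of_lt hq.2.1)).symm :
    ∀ q ∈ Finset.univ.filter (fun q : Fin 5 × Fin 5 => q.1 < q.2 ∧ ε q.1 = -1 ∧ ε q.2 = -1),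
      ((n q.1 q.2 : ℝ)) = 2 * k q.1 q.2)]
  have s01 := hsymm 0 1 (by decide); have s02 := hsymm 0 2 (by decide)
  have s03 := hsymm 0 3 (by decide); have s04 := hsymm 0 4 (by decide)
  have s12 := hsymm 1 2 (by decide); have s13 := hsymm 1 3 (by decide)
  have s14 := hsymm 1 4 (by decide); have s23 := hsymm 2 3 (by decide)
  have s24 := hsymm 2 4 (by decide); have s34 := hsymm 3 4 (by decide)
  simp only [Finset.sum_filter, Fintype.sum_prod_type, Fin.sum_univ_five, show (((0:Fin 5) < 0) = False) from by decide, show (((0:Fin 5) = 0) = True) from by decide, show (((0:Fin 5) < 1) = True) from by decide, show (((0:Fin 5) = 1) = False) from by decide, show (((0:Fin 5) < 2) = True) from by decide, show (((0:Fin 5) = 2) = False) from by decide, show (((0:Fin 5) < 3) = True) from by decide, show (((0:Fin 5) = 3) = False) from by decide, show (((0:Fin 5) < 4) = True) from by decide, show (((0:Fin 5) = 4) = False) from by decide, show (((1:Fin 5) < 0) = False) from by decide, show (((1:Fin 5) = 0) = False) from by decide, show (((1:Fin 5) < 1) = False) from by decide, show (((1:Fin 5) = 1) = True) from by decide, show (((1:Fin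 5) < 2) = True) from by decide, show (((1:Fin 5) = 2) = False) from by decide, show (((1:Fin 5) < 3) = True) from by decide, show (((1:Fin 5) = 3) = False) from by decide, show (((1:Fin 5) < 4) = True) from by decide, show (((1:Fin 5) = 4) = False) from by decide, show (((2:Fin 5) < 0) = False) from by decide, show (((2:Fin 5) = 0) = False) from by decide, show (((2:Fin 5) < 1) = False) from by decide, show (((2:Fin 5) = 1) = False) from by decide, show (((2:Fin 5) < 2) = False) from by decide, show (((2:Fin 5) = 2) = True) from by decide, show (((2:Fin 5) < 3) = True) from by decide, show (((2:Fin 5) = 3) = False) from by decide, show (((2:Fin 5) < 4) = True) from by decide, show (((2:Fin 5) = 4) = False) from by decide, show (((3:Fin 5) < 0) = False) from by decide, show (((3:Fin 5) = 0) = False) from by decide, show (((3:Fin 5) < 1) = False) from by decide, show (((3:Fin 5) = 1) = False) from by decide, show (((3:Fin 5) < 2) = False) from by decide, show (((3:Fin 5) = 2) = False) from by decide, show (((3:Fin 5) < 3) = False) from by decide, show (((3:Fin 5) = 3) = True) from by decide, show (((3:Fin 5) < 4) = True) from by decide, show (((3:Fin 5) = 4) = False) from by decide, show (((4:Fin 5)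 < 0) = False) from by decide, show (((4:Fin 5) = 0) = False) from by decide, show (((4:Fin 5) < 1) = False) from by decide, show (((4:Fin 5) = 1) = False) from by decide, show (((4:Fin 5) < 2) = False) from by decide, show (((4:Fin 5) = 2) = False) from by decide, show (((4:Fin 5) < 3) = False) from by decide, show (((4:Fin 5) = 3) = False) from by decide, show (((4:Fin 5) < 4) = False) from by decide, show (((4:Fin 5) = 4) = True) from by decide,
    true_and, false_and, and_false, and_true, if_true, if_false, ite_true, ite_false,
    Ne, not_true, not_false_iff, add_zero, zero_add]
  rcases hε 0 with h0 | h0 <;> rcases hε 1 with h1 | h1 <;> rcases hε 2 with h2 | h2 <;>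
    rcases hε 3 with h3 | h3 <;> rcases hε 4 with h4 | h4 <;>
    simp only [h0, h1, h2, h3, h4] <;>
    norm_num <;>
    linarith [s01, s02, s03, s04, s12, s13, s14, s23, s24, s34]
end

section
/- Let ξ₁, …, ξ₄ ∈ ℂ² be unit spinors, let n_b ∈ ℝ³ have components (n_b)ᵢ = ⟨ξ_b, σᵢ ξ_b⟩, and let p, k : Fin 4 → ℝ. Then the following are equivalent: (i) for every traceless matrix L ∈ M₂(ℂ), Σ_b [ i p_b (⟨ξ_b, L ξ_b⟩ + ⟨ξ_b, Lᴴ ξ_b⟩) + k_b (⟨ξ_b, Lᴴ ξ_b⟩ − ⟨ξ_b, L ξ_b⟩) ] = 0; (ii) Σ_b p_b n_b = 0 and Σ_b k_b n_b = 0. -/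
open Matrix

noncomputable section

/-! Traceless 2×2 matrices split as `sl(2,ℂ) = su(2) ⊕ i·su(2)`: every such `L` is `σ·a + i σ·c`
with `a c : ℝ³`, and `⟨ξ, (σ·a) ξ⟩ = a·n` is real. The variation of the action along `L` is
therefore `2i (a·Σ p_b n_b − c·Σ k_b n_b)`, which vanishes for all `a, c` iff both closure sums do. -/

def blochVector (z : Fin 2 → ℂ) : Fin 3 → ℝ := fun i => (herm z (pauli i *ᵥ z)).re

lemma herm_eq_dotProduct (z w : Fin 2 → ℂ) : herm z w = star z ⬝ᵥ w := by
  simp [herm, dotProduct, Fin.sum_univ_two]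

lemma herm_conjTranspose_mulVec (L : Matrix (Fin 2) (Fin 2) ℂ) (z : Fin 2 → ℂ) :
    herm z (Lᴴ *ᵥ z) = starRingEnd ℂ (herm z (L *ᵥ z)) := by
  simp only [herm, RCLike.star_def, mulVec, dotProduct, conjTranspose_apply, Fin.sum_univ_two,
    map_add, map_mul, RingHomCompTriple.comp_apply, RingHom.id_apply]
  ring

lemma isHermitian_pauli (i : Fin 3) : (pauli i).IsHermitian := by
  fin_cases i <;> ext a b <;> fin_cases a <;> fin_cases b <;>
    simp [pauli, σ1, σ2, σ3, conjTranspose_apply]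

lemma trace_pauli (i : Fin 3) : (pauli i).trace = 0 := by
  fin_cases i <;> simp [pauli, σ1, σ2, σ3, trace, Fin.sum_univ_two]

lemma herm_pauli_mulVec (z : Fin 2 → ℂ) (i : Fin 3) :
    herm z (pauli i *ᵥ z) = blochVector z i :=
  (Complex.conj_eq_iff_re.mp <| by
    rw [← herm_conjTranspose_mulVec, (isHermitian_pauli i).eq]).symm

lemma herm_sigmaDot_mulVec (a : Fin 3 → ℝ) (z : Fin 2 → ℂ) :
    herm z (sigmaDot a *ᵥ z) = ↑(a ⬝ᵥ blochVector z) := by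
  rw [sigmaDot, sum_mulVec, herm_eq_dotProduct, dotProduct_sum]
  simp only [smul_mulVec, dotProduct_smul, ← herm_eq_dotProduct, herm_pauli_mulVec]
  simp [dotProduct]

lemma trace_sigmaDot (a : Fin 3 → ℝ) : (sigmaDot a).trace = 0 := by
  simp [sigmaDot, trace_sum, trace_pauli]

lemma sigmaDot_add_I_smul_sigmaDot (a c : Fin 3 → ℝ) :
    sigmaDot a + Complex.I • sigmaDot c = ∑ i, (a i + Complex.I * c i) • pauli i := by
  unfold sigmaDot
  simp only [Finset.smul_sum, smul_smul, add_smul, Finset.sum_add_distrib]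

lemma exists_eq_sigmaDot_add_I_smul_sigmaDot {L : Matrix (Fin 2) (Fin 2) ℂ} (hL : L.trace = 0) :
    ∃ a c : Fin 3 → ℝ, L = sigmaDot a + Complex.I • sigmaDot c := by
  -- the coordinates of `L` in the Pauli basis
  set w : Fin 3 → ℂ := ![(L 0 1 + L 1 0) / 2, Complex.I * (L 0 1 - L 1 0) / 2, L 0 0]
  refine ⟨fun i => (w i).re, fun i => (w i).im, ?_⟩
  rw [sigmaDot_add_I_smul_sigmaDot]
  simp only [mul_comm Complex.I, Complex.re_add_im]
  have hL11 : L 1 1 = -L 0 0 := by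
    rw [trace_fin_two] at hL
    linear_combination hL
  ext i j
  fin_cases i <;> fin_cases j <;>
    simp [w, Fin.sum_univ_three, pauli, σ1, σ2, σ3, hL11] <;> ring_nf <;> rw [Complex.I_sq] <;> ring

lemma herm_sigmaDot_add_I_smul_sigmaDot_mulVec (a c : Fin 3 → ℝ) (z : Fin 2 → ℂ) :
    herm z ((sigmaDot a + Complex.I • sigmaDot c) *ᵥ z)
      = ↑(a ⬝ᵥ blochVector z) + Complex.I * ↑(c ⬝ᵥ blochVector z) := by
  rw [herm_eq_dotProduct, add_mulVec, smul_mulVec, dotProduct_add, dotProduct_smul,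
    ← herm_eq_dotProduct, ← herm_eq_dotProduct, herm_sigmaDot_mulVec, herm_sigmaDot_mulVec,
    smul_eq_mul]

lemma sum_variation_sigmaDot_add_I_smul_sigmaDot {ι : Type*} [Fintype ι]
    (ξ : ι → Fin 2 → ℂ) (p k : ι → ℝ) (a c : Fin 3 → ℝ) :
    let L := sigmaDot a + Complex.I • sigmaDot c
    ∑ b, (Complex.I * (p b : ℂ) * (herm (ξ b) (L *ᵥ ξ b) + herm (ξ b) (Lᴴ *ᵥ ξ b))
        + (k b : ℂ) * (herm (ξ b) (Lᴴ *ᵥ ξ b) - herm (ξ b) (L *ᵥ ξ b)))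
      = 2 * Complex.I * ↑(a ⬝ᵥ ∑ b, p b • blochVector (ξ b)
          - c ⬝ᵥ ∑ b, k b • blochVector (ξ b)) := by
  intro L
  simp only [herm_conjTranspose_mulVec, L, herm_sigmaDot_add_I_smul_sigmaDot_mulVec, map_add,
    map_mul, Complex.conj_ofReal, Complex.conj_I, dotProduct_sum, dotProduct_smul, smul_eq_mul]
  push_cast
  rw [mul_sub, Finset.mul_sum, Finset.mul_sum, ← Finset.sum_sub_distrib]
  refine Finset.sum_congr rfl fun b _ => ?_
  ring

lemma forall_dotProduct_sub_dotProduct_eq_zero_iff {ι : Type*} [Fintype ι] (P K : ι → ℝ) :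
    (∀ a c : ι → ℝ, a ⬝ᵥ P - c ⬝ᵥ K = 0) ↔ P = 0 ∧ K = 0 := by
  refine ⟨fun h => ⟨?_, ?_⟩, by rintro ⟨rfl, rfl⟩; simp⟩
  · simpa [dotProduct_self_eq_zero] using h P 0
  · simpa [dotProduct_self_eq_zero] using h 0 K

theorem stmt14_general (ξ : Fin 4 → Fin 2 → ℂ) (p k : Fin 4 → ℝ) :
    (∀ L : Matrix (Fin 2) (Fin 2) ℂ, L.trace = 0 →
      ∑ b : Fin 4,
        (Complex.I * (p b : ℂ) *
            (herm (ξ b) (L.mulVec (ξ b)) + herm (ξ b) (Lᴴ.mulVec (ξ b)))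
          + (k b : ℂ) *
            (herm (ξ b) (Lᴴ.mulVec (ξ b)) - herm (ξ b) (L.mulVec (ξ b)))) = 0)
    ↔ ((∑ b : Fin 4, p b • (fun i => (herm (ξ b) ((pauli i).mulVec (ξ b))).re))
          = (0 : Fin 3 → ℝ) ∧
       (∑ b : Fin 4, k b • (fun i => (herm (ξ b) ((pauli i).mulVec (ξ b))).re))
          = (0 : Fin 3 → ℝ)) := by
  change _ ↔ ∑ b, p b • blochVector (ξ b) = 0 ∧ ∑ b, k b • blochVector (ξ b) = 0
  rw [← forall_dotProduct_sub_dotProduct_eq_zero_iff]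
  constructor
  · intro h a c
    have hL : (sigmaDot a + Complex.I • sigmaDot c).trace = 0 := by
      rw [trace_add, trace_smul, trace_sigmaDot, trace_sigmaDot, smul_zero, add_zero]
    have hvar := h _ hL
    rw [sum_variation_sigmaDot_add_I_smul_sigmaDot] at hvar
    simpa [sub_eq_zero] using hvar
  · intro h L hL
    obtain ⟨a, c, rfl⟩ := exists_eq_sigmaDot_add_I_smul_sigmaDot hL
    rw [sum_variation_sigmaDot_add_I_smul_sigmaDot, h, Complex.ofReal_zero, mul_zero]

/-- Stationarity with respect to a group variable is equivalent to the pair of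
closure conditions. -/
theorem stmt14 (ξ : Fin 4 → Fin 2 → ℂ) (hξ : ∀ b, herm (ξ b) (ξ b) = 1)
    (p k : Fin 4 → ℝ) :
    (∀ L : Matrix (Fin 2) (Fin 2) ℂ, L.trace = 0 →
      ∑ b : Fin 4,
        (Complex.I * (p b : ℂ) *
            (herm (ξ b) (L.mulVec (ξ b)) + herm (ξ b) (Lᴴ.mulVec (ξ b)))
          + (k b : ℂ) *
            (herm (ξ b) (Lᴴ.mulVec (ξ b)) - herm (ξ b) (L.mulVec (ξ b)))) = 0)
    ↔ ((∑ b : Fin 4, p b • (fun i => (herm (ξ b) ((pauli i).mulVec (ξ b))).re))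
          = (0 : Fin 3 → ℝ) ∧
       (∑ b : Fin 4, k b • (fun i => (herm (ξ b) ((pauli i).mulVec (ξ b))).re))
          = (0 : Fin 3 → ℝ)) :=
  stmt14_general ξ p k
end
end

section
/- Let X, Y ∈ SL(2,ℂ), let ξ, χ ∈ ℂ² be unit spinors, let λ > 0 and θ ∈ ℝ, and suppose the two critical point equations hold: (Xᴴ)⁻¹ ξ = λ e^{iθ} (Yᴴ)⁻¹ (Jχ) and X ξ = λ⁻¹ e^{iθ} Y (Jχ). Then ξ is an eigenvector of the Hermitian matrix X⁻¹ Y Yᴴ (Xᴴ)⁻¹ with eigenvalue λ²: X⁻¹ Y Yᴴ (Xᴴ)⁻¹ ξ = λ² ξ. Consequently tr((X Xᴴ)⁻¹ (Y Yᴴ)) = λ² + λ⁻². -/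
open Matrix

noncomputable section

/-! Substituting the second critical equation into the first shows that ξ is a λ²-eigenvector of
`X⁻¹ Y Yᴴ (Xᴴ)⁻¹`. This matrix has determinant 1, so its other eigenvalue is λ⁻², and its trace,
which by cyclicity is `tr((X Xᴴ)⁻¹ (Y Yᴴ))`, is λ² + λ⁻². -/

namespace Matrix

theorem trace_fin_two_eq_of_mulVec_eq_smul {K : Type*} [Field K]
    {M : Matrix (Fin 2) (Fin 2) K} {v : Fin 2 → K} {μ : K} (hv : v ≠ 0) (hμ : μ ≠ 0)
    (h : M *ᵥ v = μ • v) : M.trace = μ + M.det / μ := by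
  have hroot : (scalar (Fin 2) μ - M).det = 0 :=
    exists_mulVec_eq_zero_iff.mp ⟨v, hv, by simp [sub_mulVec, h]⟩
  have hchar := M.eval_charpoly μ
  rw [charpoly_fin_two, hroot] at hchar
  simp only [Polynomial.eval_add, Polynomial.eval_sub, Polynomial.eval_pow, Polynomial.eval_X,
    Polynomial.eval_mul, Polynomial.eval_C] at hchar
  field_simp
  linear_combination -hchar

theorem inv_mul_mul_conjTranspose_mul_inv_mulVec_eq_smul {n K : Type*} [Fintype n]
    [DecidableEq n] [Field K] [StarRing K] {X Y : Matrix n n K}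
    (hX : IsUnit X.det) (hY : IsUnit Yᴴ.det) {ξ η : n → K} {a b : K} (hb : b ≠ 0)
    (h₁ : (Xᴴ)⁻¹ *ᵥ ξ = a • (Yᴴ)⁻¹ *ᵥ η) (h₂ : X *ᵥ ξ = b • Y *ᵥ η) :
    (X⁻¹ * Y * Yᴴ * (Xᴴ)⁻¹) *ᵥ ξ = (a / b) • ξ := by
  have hYη : Y *ᵥ η = b⁻¹ • X *ᵥ ξ := by rw [h₂, smul_smul, inv_mul_cancel₀ hb, one_smul]
  calc (X⁻¹ * Y * Yᴴ * (Xᴴ)⁻¹) *ᵥ ξ = X⁻¹ *ᵥ Y *ᵥ Yᴴ *ᵥ (Xᴴ)⁻¹ *ᵥ ξ := by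
        simp only [mulVec_mulVec, Matrix.mul_assoc]
    _ = a • X⁻¹ *ᵥ Y *ᵥ η := by
        rw [h₁, mulVec_smul, mulVec_mulVec _ Yᴴ, mul_nonsing_inv _ hY, one_mulVec, mulVec_smul,
          mulVec_smul]
    _ = (a / b) • ξ := by
        rw [hYη, mulVec_smul, mulVec_mulVec, nonsing_inv_mul _ hX, one_mulVec, smul_smul,
          div_eq_mul_inv]

end Matrix

theorem stmt16_general (X Y : Matrix (Fin 2) (Fin 2) ℂ) (hX : X.det = 1) (hY : Y.det = 1)
    (ξ χ : Fin 2 → ℂ) (hξ : herm ξ ξ = 1)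
    (lam θ : ℝ) (hlam : 0 < lam)
    (h1 : (Xᴴ)⁻¹.mulVec ξ
      = ((lam : ℂ) * Complex.exp (Complex.I * θ)) • (Yᴴ)⁻¹.mulVec (Jmap χ))
    (h2 : X.mulVec ξ
      = ((lam : ℂ)⁻¹ * Complex.exp (Complex.I * θ)) • Y.mulVec (Jmap χ)) :
    (X⁻¹ * Y * Yᴴ * (Xᴴ)⁻¹).mulVec ξ = ((lam : ℂ) ^ 2) • ξ ∧
    ((X * Xᴴ)⁻¹ * (Y * Yᴴ)).trace = ((lam ^ 2 + lam⁻¹ ^ 2 : ℝ) : ℂ) := by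
  have hlam₀ : (lam : ℂ) ≠ 0 := mod_cast hlam.ne'
  have heig : (X⁻¹ * Y * Yᴴ * (Xᴴ)⁻¹) *ᵥ ξ = ((lam : ℂ) ^ 2) • ξ := by
    convert inv_mul_mul_conjTranspose_mul_inv_mulVec_eq_smul (by simp [hX])
      (by simp [det_conjTranspose, hY]) (by simp [hlam₀]) h1 h2 using 2
    field_simp
  have hξ₀ : ξ ≠ 0 := by rintro rfl; simp [herm] at hξ
  have hdet : (X⁻¹ * Y * Yᴴ * (Xᴴ)⁻¹).det = 1 := by
    simp [det_nonsing_inv, det_conjTranspose, hX, hY]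
  have htrace : ((X * Xᴴ)⁻¹ * (Y * Yᴴ)).trace = (X⁻¹ * Y * Yᴴ * (Xᴴ)⁻¹).trace := by
    rw [Matrix.mul_inv_rev, trace_mul_cycle, trace_mul_comm]
    simp only [Matrix.mul_assoc]
  refine ⟨heig, ?_⟩
  rw [htrace, trace_fin_two_eq_of_mulVec_eq_smul hξ₀ (pow_ne_zero 2 hlam₀) heig, hdet]
  push_cast
  ring

/-- The two critical point equations imply ξ is a λ²-eigenvector of the Hermitian
matrix X⁻¹YYᴴ(Xᴴ)⁻¹, and tr((XXᴴ)⁻¹(YYᴴ)) = λ² + λ⁻². -/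
theorem stmt16 (X Y : Matrix (Fin 2) (Fin 2) ℂ) (hX : X.det = 1) (hY : Y.det = 1)
    (ξ χ : Fin 2 → ℂ) (hξ : herm ξ ξ = 1) (hχ : herm χ χ = 1)
    (lam θ : ℝ) (hlam : 0 < lam)
    (h1 : (Xᴴ)⁻¹.mulVec ξ
      = ((lam : ℂ) * Complex.exp (Complex.I * θ)) • (Yᴴ)⁻¹.mulVec (Jmap χ))
    (h2 : X.mulVec ξ
      = ((lam : ℂ)⁻¹ * Complex.exp (Complex.I * θ)) • Y.mulVec (Jmap χ)) :
    (X⁻¹ * Y * Yᴴ * (Xᴴ)⁻¹).mulVec ξ = ((lam : ℂ) ^ 2) • ξ ∧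
    ((X * Xᴴ)⁻¹ * (Y * Yᴴ)).trace = ((lam ^ 2 + lam⁻¹ ^ 2 : ℝ) : ℂ) :=
  stmt16_general X Y hX hY ξ χ hξ lam θ hlam h1 h2
end
end
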